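/- arXiv:1502.07220 — 3 statements merged into one kernel-verified Lean document; each statement's English description precedes it below -/
import Mathlib

section
/- The ideal generated by H_n = S_n ∪ L_n ∪ {z_1*z_2*...*z_n} equals the ideal generated by G_n = S_n ∪ L_n ∪ T_n ∪ P_n in R_n = F_2[x_1,...,x_n,y_1,...,y_n,z_1,...,z_n]. -/
open MvPolynomial

/-- The polynomial ring `R_n = F_2[x_1,…,x_n, y_1,…,y_n, z_1,…,z_n]`:
variable `(i, 0)` is `x_i`, `(i, 1)` is `y_i`, `(i, 2)` is `z_i`. -/
abbrev Rn (n : ℕ) := MvPolynomial (Fin n × Fin 3) (ZMod 2)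

/-- `S_n = {c² - c : c a variable}`. -/
def Sset (n : ℕ) : Set (Rn n) := {f | ∃ v, f = X v ^ 2 - X v}

/-- `L_n = {x_i y_i + x_i + y_i - z_i : i}`. -/
def Lset (n : ℕ) : Set (Rn n) :=
  {f | ∃ i : Fin n, f = X (i, 0) * X (i, 1) + X (i, 0) + X (i, 1) - X (i, 2)}

/-- `T_n = {x_i z_i - x_i : i} ∪ {y_i z_i - y_i : i}`. -/
def Tset (n : ℕ) : Set (Rn n) :=
  {f | ∃ i : Fin n, f = X (i, 0) * X (i, 2) - X (i, 0)} ∪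
  {f | ∃ i : Fin n, f = X (i, 1) * X (i, 2) - X (i, 1)}

/-- `P_n = {c_1 ⋯ c_n : c_i ∈ {x_i, y_i, z_i}}`. -/
def Pset (n : ℕ) : Set (Rn n) :=
  {f | ∃ c : Fin n → Fin 3, f = ∏ i, X (i, c i)}

/-- The product `z_1 z_2 ⋯ z_n`. -/
noncomputable def Zprod (n : ℕ) : Rn n := ∏ i : Fin n, X (i, 2)

noncomputable def In (n : ℕ) : Ideal (Rn n) := Ideal.span (Sset n ∪ Lset n ∪ {Zprod n})

noncomputable def qn (n : ℕ) : Rn n →+* Rn n ⧸ In n := Ideal.Quotient.mk (In n)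

lemma htwo (n : ℕ) : (2 : Rn n ⧸ In n) = 0 := by
  have h2 : (2 : Rn n) = 0 := by
    have : ((2 : ℕ) : Rn n) = 0 := CharP.cast_eq_zero _ 2
    simpa using this
  calc (2 : Rn n ⧸ In n) = qn n 2 := (map_ofNat (qn n) 2).symm
    _ = 0 := by rw [h2]; simp

lemma hsq (n : ℕ) (v : Fin n × Fin 3) : qn n (X v) ^ 2 = qn n (X v) := by
  rw [← sub_eq_zero, ← map_pow, ← map_sub]
  exact Ideal.Quotient.eq_zero_iff_mem.2
    (Ideal.subset_span (Or.inl (Or.inl ⟨v, rfl⟩)))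

lemma hLq (n : ℕ) (i : Fin n) :
    qn n (X (i, 0)) * qn n (X (i, 1)) + qn n (X (i, 0)) + qn n (X (i, 1))
      = qn n (X (i, 2)) := by
  rw [← sub_eq_zero, ← map_mul, ← map_add, ← map_add, ← map_sub]
  exact Ideal.Quotient.eq_zero_iff_mem.2
    (Ideal.subset_span (Or.inl (Or.inr ⟨i, rfl⟩)))

lemma hmul (n : ℕ) (i : Fin n) (c : Fin 3) :
    qn n (X (i, c)) * qn n (X (i, 2)) = qn n (X (i, c)) := by
  have hxy := hLq n i
  have h2 := htwo n
  fin_cases c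
  · show qn n (X (i, 0)) * qn n (X (i, 2)) = qn n (X (i, 0))
    have hx2 := hsq n (i, 0)
    linear_combination (-(qn n (X (i, 0)))) * hxy + (qn n (X (i, 1)) + 1) * hx2
      + (qn n (X (i, 0)) * qn n (X (i, 1))) * h2
  · show qn n (X (i, 1)) * qn n (X (i, 2)) = qn n (X (i, 1))
    have hy2 := hsq n (i, 1)
    linear_combination (-(qn n (X (i, 1)))) * hxy + (qn n (X (i, 0)) + 1) * hy2
      + (qn n (X (i, 0)) * qn n (X (i, 1))) * h2
  · show qn n (X (i, 2)) * qn n (X (i, 2)) = qn n (X (i, 2))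
    have hz2 := hsq n (i, 2)
    linear_combination hz2

lemma hZ (n : ℕ) : ∏ i : Fin n, qn n (X (i, 2)) = 0 := by
  rw [← map_prod]
  exact Ideal.Quotient.eq_zero_iff_mem.2
    (Ideal.subset_span (Or.inr rfl))

lemma hPmem (n : ℕ) (c : Fin n → Fin 3) : (∏ i, X (i, c i) : Rn n) ∈ In n := by
  rw [← Ideal.Quotient.eq_zero_iff_mem]
  show qn n _ = 0
  rw [map_prod]
  calc ∏ i, qn n (X (i, c i))
      = ∏ i, (qn n (X (i, c i)) * qn n (X (i, 2))) := by
        exact Finset.prod_congr rfl fun i _ => (hmul n i (c i)).symm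
    _ = (∏ i, qn n (X (i, c i))) * ∏ i : Fin n, qn n (X (i, 2)) :=
        Finset.prod_mul_distrib
    _ = 0 := by rw [hZ]; ring

lemma hTmem (n : ℕ) (i : Fin n) (c : Fin 3) :
    (X (i, c) * X (i, 2) - X (i, c) : Rn n) ∈ In n := by
  rw [← Ideal.Quotient.eq_zero_iff_mem]
  show qn n _ = 0
  rw [map_sub, map_mul, hmul, sub_self]


theorem stmt_8 (n : ℕ) :
    Ideal.span (Sset n ∪ Lset n ∪ {Zprod n}) =
      Ideal.span (Sset n ∪ Lset n ∪ Tset n ∪ Pset n) := by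
  apply le_antisymm
  · apply Ideal.span_le.2
    rintro f ((hf | hf) | hf)
    · exact Ideal.subset_span (Or.inl (Or.inl (Or.inl hf)))
    · exact Ideal.subset_span (Or.inl (Or.inl (Or.inr hf)))
    · rw [Set.mem_singleton_iff] at hf
      subst hf
      exact Ideal.subset_span (Or.inr ⟨fun _ => 2, rfl⟩)
  · apply Ideal.span_le.2
    rintro f (((hf | hf) | hf) | hf)
    · exact Ideal.subset_span (Or.inl (Or.inl hf))
    · exact Ideal.subset_span (Or.inl (Or.inr hf))
    · rcases hf with ⟨i, rfl⟩ | ⟨i, rfl⟩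
      · exact hTmem n i 0
      · exact hTmem n i 1
    · rcases hf with ⟨c, rfl⟩
      exact hPmem n c
end

section
/- Every monomial c_1*...*c_n with c_i ∈ {x_i, y_i, z_i} (i.e., every element of P_n) lies in the ideal generated by S_n ∪ L_n ∪ {z_1*z_2*...*z_n}. -/
open MvPolynomial

lemma mem_S {n : ℕ} (v : Fin n × Fin 3) :
    (X v ^ 2 - X v : Rn n) ∈ Ideal.span (Sset n ∪ Lset n ∪ {Zprod n}) :=
  Ideal.subset_span (Or.inl (Or.inl ⟨v, rfl⟩))

lemma mem_L {n : ℕ} (i : Fin n) :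
    (X (i, 0) * X (i, 1) + X (i, 0) + X (i, 1) - X (i, 2) : Rn n) ∈
      Ideal.span (Sset n ∪ Lset n ∪ {Zprod n}) :=
  Ideal.subset_span (Or.inl (Or.inr ⟨i, rfl⟩))

lemma cz_mem {n : ℕ} (i : Fin n) (c : Fin 3) :
    (X (i, c) * X (i, 2) - X (i, c) : Rn n) ∈
      Ideal.span (Sset n ∪ Lset n ∪ {Zprod n}) := by
  set J := Ideal.span (Sset n ∪ Lset n ∪ {Zprod n}) with hJ
  have h2 : (2 : Rn n) = 0 := CharTwo.two_eq_zero
  fin_cases c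
  · show X (i, 0) * X (i, 2) - X (i, 0) ∈ J
    have h : (X (i, 0) * X (i, 2) - X (i, 0) : Rn n)
        = X (i, 1) * (X (i, 0) ^ 2 - X (i, 0)) + (X (i, 0) ^ 2 - X (i, 0))
          - X (i, 0) * (X (i, 0) * X (i, 1) + X (i, 0) + X (i, 1) - X (i, 2)) := by
      linear_combination X (i, 0) * X (i, 1) * h2
    rw [h]
    exact sub_mem (add_mem (Ideal.mul_mem_left _ _ (mem_S _)) (mem_S _))
      (Ideal.mul_mem_left _ _ (mem_L i))
  · show X (i, 1) * X (i, 2) - X (i, 1) ∈ J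
    have h : (X (i, 1) * X (i, 2) - X (i, 1) : Rn n)
        = X (i, 0) * (X (i, 1) ^ 2 - X (i, 1)) + (X (i, 1) ^ 2 - X (i, 1))
          - X (i, 1) * (X (i, 0) * X (i, 1) + X (i, 0) + X (i, 1) - X (i, 2)) := by
      linear_combination X (i, 0) * X (i, 1) * h2
    rw [h]
    exact sub_mem (add_mem (Ideal.mul_mem_left _ _ (mem_S _)) (mem_S _))
      (Ideal.mul_mem_left _ _ (mem_L i))
  · show X (i, 2) * X (i, 2) - X (i, 2) ∈ J
    have h : (X (i, 2) * X (i, 2) - X (i, 2) : Rn n) = X (i, 2) ^ 2 - X (i, 2) := by ring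
    rw [h]; exact mem_S _

lemma prod_z_mem {n : ℕ} (c : Fin n → Fin 3) (s : Finset (Fin n)) :
    ((∏ i, X (i, c i)) * ∏ i ∈ s, X (i, 2) - ∏ i, X (i, c i) : Rn n) ∈
      Ideal.span (Sset n ∪ Lset n ∪ {Zprod n}) := by
  classical
  induction s using Finset.induction_on with
  | empty => simp only [Finset.prod_empty, mul_one, sub_self]; exact (Ideal.zero_mem _)
  | @insert j s hj ih =>
    have hp : (∏ i, X (i, c i) : Rn n)
        = X (j, c j) * ∏ i ∈ Finset.univ.erase j, X (i, c i) :=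
      (Finset.mul_prod_erase Finset.univ _ (Finset.mem_univ j)).symm
    have hstep : ((∏ i, X (i, c i)) * X (j, 2) - ∏ i, X (i, c i) : Rn n) ∈
        Ideal.span (Sset n ∪ Lset n ∪ {Zprod n}) := by
      have : ((∏ i, X (i, c i)) * X (j, 2) - ∏ i, X (i, c i) : Rn n)
          = (∏ i ∈ Finset.univ.erase j, X (i, c i)) *
              (X (j, c j) * X (j, 2) - X (j, c j)) := by
        rw [hp]; ring
      rw [this]
      exact Ideal.mul_mem_left _ _ (cz_mem j (c j))
    have heq : ((∏ i, X (i, c i)) * ∏ i ∈ insert j s, X (i, 2)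
          - ∏ i, X (i, c i) : Rn n)
        = (∏ i ∈ s, X (i, 2)) * ((∏ i, X (i, c i)) * X (j, 2) - ∏ i, X (i, c i))
          + ((∏ i, X (i, c i)) * ∏ i ∈ s, X (i, 2) - ∏ i, X (i, c i)) := by
      rw [Finset.prod_insert hj]; ring
    rw [heq]
    exact add_mem (Ideal.mul_mem_left _ _ hstep) ih

theorem stmt_11 (n : ℕ) :
    ∀ p ∈ Pset n, p ∈ Ideal.span (Sset n ∪ Lset n ∪ {Zprod n}) := by
  rintro p ⟨c, rfl⟩
  have h1 : ((∏ i, X (i, c i)) * Zprod n - ∏ i, X (i, c i) : Rn n) ∈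
      Ideal.span (Sset n ∪ Lset n ∪ {Zprod n}) := prod_z_mem c Finset.univ
  have h2 : ((∏ i, X (i, c i)) * Zprod n : Rn n) ∈
      Ideal.span (Sset n ∪ Lset n ∪ {Zprod n}) :=
    Ideal.mul_mem_left _ _ (Ideal.subset_span (Or.inr rfl))
  have : (∏ i, X (i, c i) : Rn n)
      = (∏ i, X (i, c i)) * Zprod n - ((∏ i, X (i, c i)) * Zprod n - ∏ i, X (i, c i)) := by
    ring
  rw [this]
  exact sub_mem h2 h1
end

section
/- The number of common zeros in F_2^{3n} of the set H_n = S_n ∪ L_n ∪ {z_1*...*z_n} is 4^n - 3^n. -/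
open MvPolynomial

theorem stmt_13 (n : ℕ) :
    {a : Fin n × Fin 3 → ZMod 2 |
        ∀ f ∈ Sset n ∪ Lset n ∪ {Zprod n}, MvPolynomial.eval a f = 0}.ncard =
      4 ^ n - 3 ^ n := by
  classical
  have hset : {a : Fin n × Fin 3 → ZMod 2 |
      ∀ f ∈ Sset n ∪ Lset n ∪ {Zprod n}, MvPolynomial.eval a f = 0} =
      {a : Fin n × Fin 3 → ZMod 2 |
        (∀ i : Fin n, a (i, 2) = a (i, 0) * a (i, 1) + a (i, 0) + a (i, 1)) ∧
        ∃ i : Fin n, a (i, 2) = 0} := by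
    ext a
    simp only [Set.mem_setOf_eq, Set.mem_union, Set.mem_singleton_iff, Sset, Lset, Zprod]
    constructor
    · intro h
      refine ⟨fun i => ?_, ?_⟩
      · have := h _ (Or.inl (Or.inr ⟨i, rfl⟩))
        simp only [map_add, map_mul, map_sub, eval_X, sub_eq_zero] at this
        exact this.symm
      · have := h _ (Or.inr rfl)
        rw [map_prod] at this
        rcases Finset.prod_eq_zero_iff.mp this with ⟨i, _, hi⟩
        rw [eval_X] at hi
        exact ⟨i, hi⟩
    · rintro ⟨h1, i, hi⟩ f hf
      rcases hf with (⟨v, rfl⟩ | ⟨j, rfl⟩) | rfl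
      · have hx : ∀ x : ZMod 2, x ^ 2 - x = 0 := by decide
        simp only [map_sub, map_pow, eval_X]
        exact hx _
      · simp only [map_add, map_mul, map_sub, eval_X, sub_eq_zero]
        exact (h1 j).symm
      · rw [map_prod]
        refine Finset.prod_eq_zero (Finset.mem_univ i) ?_
        rw [eval_X]; exact hi
  rw [hset]
  -- bijection with pairs
  let T : Set (Fin n → ZMod 2 × ZMod 2) := {b | ∃ i, b i = (0, 0)}
  have key : ∀ x y : ZMod 2, x * y + x + y = 0 ↔ x = 0 ∧ y = 0 := by decide
  have e : {a : Fin n × Fin 3 → ZMod 2 |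
        (∀ i : Fin n, a (i, 2) = a (i, 0) * a (i, 1) + a (i, 0) + a (i, 1)) ∧
        ∃ i : Fin n, a (i, 2) = 0} ≃ T := by
    refine ⟨fun a => ⟨fun i => (a.1 (i, 0), a.1 (i, 1)), ?_⟩,
      fun b => ⟨fun v => if v.2 = 0 then (b.1 v.1).1 else if v.2 = 1 then (b.1 v.1).2
        else (b.1 v.1).1 * (b.1 v.1).2 + (b.1 v.1).1 + (b.1 v.1).2, ?_⟩, ?_, ?_⟩
    · obtain ⟨a, h1, i, hi⟩ := a
      refine ⟨i, ?_⟩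
      have := (h1 i).symm.trans hi
      have := (key _ _).mp this
      exact Prod.ext this.1 this.2
    · obtain ⟨b, i, hi⟩ := b
      refine ⟨fun j => rfl, ⟨i, ?_⟩⟩
      have h1 : (b i).1 = 0 := by rw [hi]
      have h2 : (b i).2 = 0 := by rw [hi]
      show (b i).1 * (b i).2 + (b i).1 + (b i).2 = 0
      rw [h1, h2]; ring
    · rintro ⟨a, h1, hi⟩
      ext ⟨j, k⟩
      fin_cases k <;> simp [h1 j]
    · rintro ⟨b, hb⟩
      apply Subtype.ext
      funext i
      exact Prod.ext rfl rfl
  have hcard : Nat.card T = 4 ^ n - 3 ^ n := by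
    have : T = {b : Fin n → ZMod 2 × ZMod 2 | ¬ ∀ i, b i ≠ (0, 0)} := by
      ext b; simp [T]
    rw [this]
    rw [Nat.card_eq_fintype_card]
    have h4 : Fintype.card (Fin n → ZMod 2 × ZMod 2) = 4 ^ n := by
      simp [Fintype.card_fun]
    have hc : Fintype.card {b : Fin n → ZMod 2 × ZMod 2 // ∀ i, b i ≠ (0, 0)} = 3 ^ n := by
      rw [Fintype.card_congr (Equiv.subtypePiEquivPi (p := fun _ (x : ZMod 2 × ZMod 2) => x ≠ (0,0)))]
      rw [Fintype.card_pi]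
      have : Fintype.card {x : ZMod 2 × ZMod 2 // x ≠ (0, 0)} = 3 := by decide
      simp [this]
    calc Fintype.card {b : Fin n → ZMod 2 × ZMod 2 // ¬ ∀ i, b i ≠ (0, 0)}
        = Fintype.card (Fin n → ZMod 2 × ZMod 2) -
            Fintype.card {b : Fin n → ZMod 2 × ZMod 2 // ∀ i, b i ≠ (0, 0)} :=
          Fintype.card_subtype_compl _
      _ = 4 ^ n - 3 ^ n := by rw [h4, hc]
  rw [← Nat.card_coe_set_eq, Nat.card_congr e, hcard]
end
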